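/- arXiv:2006.03853 — 6 statements merged into one kernel-verified Lean document; each statement's English description precedes it below -/
import Mathlib

section
/- The vector fields χ1 = cos v cos y ∂x + cos v tan x sin y ∂y + sin v tan x sec y ∂v and χ2 = sin v cos y ∂x + sin v tan x sin y ∂y − cos v tan x sec y ∂v satisfy the Lie bracket relation [χ1, χ2] = −χ6, where χ6 = ∂v. -/
noncomputable section
open Real

/-- Partial derivative in the first coordinate x. -/
def Dx (g : ℝ → ℝ → ℝ → ℝ) (x y v : ℝ) : ℝ := deriv (fun t => g t y v) x
/-- Partial derivative in the second coordinate y. -/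
def Dy (g : ℝ → ℝ → ℝ → ℝ) (x y v : ℝ) : ℝ := deriv (fun t => g x t v) y
/-- Partial derivative in the third coordinate v. -/
def Dv (g : ℝ → ℝ → ℝ → ℝ) (x y v : ℝ) : ℝ := deriv (fun t => g x y t) v

/-- Directional derivative of g along the vector field (X1, X2, X3). -/
def dirD (X1 X2 X3 g : ℝ → ℝ → ℝ → ℝ) (x y v : ℝ) : ℝ :=
  X1 x y v * Dx g x y v + X2 x y v * Dy g x y v + X3 x y v * Dv g x y v

/-- Componentwise Lie bracket [A, B]ⁱ = Σⱼ (Aʲ ∂ⱼBⁱ − Bʲ ∂ⱼAⁱ). -/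
def lieB (A1 A2 A3 B1 B2 B3 : ℝ → ℝ → ℝ → ℝ) (x y v : ℝ) : ℝ × ℝ × ℝ :=
  (dirD A1 A2 A3 B1 x y v - dirD B1 B2 B3 A1 x y v,
   dirD A1 A2 A3 B2 x y v - dirD B1 B2 B3 A2 x y v,
   dirD A1 A2 A3 B3 x y v - dirD B1 B2 B3 A3 x y v)

def chi1₁ : ℝ → ℝ → ℝ → ℝ := fun _ y v => cos v * cos y
def chi1₂ : ℝ → ℝ → ℝ → ℝ := fun x y v => cos v * tan x * sin y
def chi1₃ : ℝ → ℝ → ℝ → ℝ := fun x y v => sin v * tan x * (cos y)⁻¹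

def chi2₁ : ℝ → ℝ → ℝ → ℝ := fun _ y v => sin v * cos y
def chi2₂ : ℝ → ℝ → ℝ → ℝ := fun x y v => sin v * tan x * sin y
def chi2₃ : ℝ → ℝ → ℝ → ℝ := fun x y v => -(cos v * tan x * (cos y)⁻¹)

def chi3₁ : ℝ → ℝ → ℝ → ℝ := fun _ y _ => sin y
def chi3₂ : ℝ → ℝ → ℝ → ℝ := fun x y _ => -(tan x * cos y)
def chi3₃ : ℝ → ℝ → ℝ → ℝ := fun _ _ _ => 0

def chi4₁ : ℝ → ℝ → ℝ → ℝ := fun _ _ _ => 0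
def chi4₂ : ℝ → ℝ → ℝ → ℝ := fun _ _ v => cos v
def chi4₃ : ℝ → ℝ → ℝ → ℝ := fun _ y v => sin v * tan y

def chi5₁ : ℝ → ℝ → ℝ → ℝ := fun _ _ _ => 0
def chi5₂ : ℝ → ℝ → ℝ → ℝ := fun _ _ v => sin v
def chi5₃ : ℝ → ℝ → ℝ → ℝ := fun _ y v => -(cos v * tan y)

def chi6₁ : ℝ → ℝ → ℝ → ℝ := fun _ _ _ => 0
def chi6₂ : ℝ → ℝ → ℝ → ℝ := fun _ _ _ => 0
def chi6₃ : ℝ → ℝ → ℝ → ℝ := fun _ _ _ => 1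

theorem chi1_chi2_bracket (x y v : ℝ) (hx : cos x ≠ 0) (hy : cos y ≠ 0) :
    lieB chi1₁ chi1₂ chi1₃ chi2₁ chi2₂ chi2₃ x y v =
      (-(chi6₁ x y v), -(chi6₂ x y v), -(chi6₃ x y v)) := by
  simp only [lieB, dirD, Dx, Dy, Dv, chi1₁, chi1₂, chi1₃, chi2₁, chi2₂, chi2₃, chi6₁, chi6₂,
    chi6₃, deriv_const, deriv.fun_neg, deriv_mul_const_field, deriv_const_mul_field,
    Real.deriv_tan, Real.deriv_cos, Real.deriv_sin, deriv_fun_inv'' differentiableAt_cos hy]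
  rw [tan_eq_sin_div_cos]
  refine Prod.ext ?_ (Prod.ext ?_ ?_)
  · field_simp
    ring
  · field_simp
    ring
  · -- The v-component is (sin² v + cos² v) (tan² x (sec² y − tan² y) − sec² x).
    field_simp
    linear_combination (sin x ^ 2 * (1 - sin y ^ 2) - cos y ^ 2) * sin_sq_add_cos_sq v -
      sin x ^ 2 * sin_sq_add_cos_sq y + cos y ^ 2 * sin_sq_add_cos_sq x

end
end

section
/- The vector fields χ1 = cos v cos y ∂x + cos v tan x sin y ∂y + sin v tan x sec y ∂v and χ3 = sin y ∂x − tan x cos y ∂y satisfy [χ1, χ3] = −χ4, where χ4 = cos v ∂y + sin v tan y ∂v. -/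
noncomputable section
open Real

/-! Each component of the bracket is a difference of two directional derivatives that, after
`sin² y + cos² y = 1`, differ only by `cos⁻² x − tan² x = 1`. -/

theorem dirD_eq_of_hasDerivAt {X1 X2 X3 g : ℝ → ℝ → ℝ → ℝ} {x y v gx gy gv : ℝ}
    (hgx : HasDerivAt (fun t => g t y v) gx x) (hgy : HasDerivAt (fun t => g x t v) gy y)
    (hgv : HasDerivAt (fun t => g x y t) gv v) :
    dirD X1 X2 X3 g x y v = X1 x y v * gx + X2 x y v * gy + X3 x y v * gv := by
  rw [dirD, Dx, Dy, Dv, hgx.deriv, hgy.deriv, hgv.deriv]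

theorem one_div_cos_sq_eq_one_add_tan_sq {x : ℝ} (hx : cos x ≠ 0) :
    1 / cos x ^ 2 = 1 + tan x ^ 2 := by
  rw [one_div, ← inv_one_add_tan_sq hx, inv_inv]

section

variable {x y v : ℝ}

theorem dirD_chi1_chi3₁ : dirD chi1₁ chi1₂ chi1₃ chi3₁ x y v = cos v * tan x * sin y * cos y := by
  rw [dirD_eq_of_hasDerivAt (g := chi3₁) (hasDerivAt_const x _) (hasDerivAt_sin y)
    (hasDerivAt_const v _)]
  simp only [chi1₁, chi1₂, chi1₃]
  ring

theorem dirD_chi1_chi3₂ (hx : cos x ≠ 0) :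
    dirD chi1₁ chi1₂ chi1₃ chi3₂ x y v =
      cos v * (tan x ^ 2 * sin y ^ 2 - cos y ^ 2 / cos x ^ 2) := by
  rw [dirD_eq_of_hasDerivAt (g := chi3₂) ((hasDerivAt_tan hx).mul_const (cos y)).neg
    ((hasDerivAt_cos y).const_mul (tan x)).neg (hasDerivAt_const v _)]
  simp only [chi1₁, chi1₂, chi1₃]
  ring

theorem dirD_chi1_chi3₃ : dirD chi1₁ chi1₂ chi1₃ chi3₃ x y v = 0 := by
  rw [dirD_eq_of_hasDerivAt (g := chi3₃) (hasDerivAt_const x _) (hasDerivAt_const y _)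
    (hasDerivAt_const v _)]
  ring

theorem dirD_chi3_chi1₁ : dirD chi3₁ chi3₂ chi3₃ chi1₁ x y v = cos v * tan x * sin y * cos y := by
  rw [dirD_eq_of_hasDerivAt (g := chi1₁) (hasDerivAt_const x _)
    ((hasDerivAt_cos y).const_mul (cos v)) ((hasDerivAt_cos v).mul_const (cos y))]
  simp only [chi3₁, chi3₂, chi3₃]
  ring

theorem dirD_chi3_chi1₂ (hx : cos x ≠ 0) :
    dirD chi3₁ chi3₂ chi3₃ chi1₂ x y v =
      cos v * (sin y ^ 2 / cos x ^ 2 - tan x ^ 2 * cos y ^ 2) := by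
  rw [dirD_eq_of_hasDerivAt (g := chi1₂) (((hasDerivAt_tan hx).const_mul (cos v)).mul_const _)
    ((hasDerivAt_sin y).const_mul (cos v * tan x))
    (((hasDerivAt_cos v).mul_const (tan x)).mul_const (sin y))]
  simp only [chi3₁, chi3₂, chi3₃]
  ring

theorem dirD_chi3_chi1₃ (hx : cos x ≠ 0) (hy : cos y ≠ 0) :
    dirD chi3₁ chi3₂ chi3₃ chi1₃ x y v =
      sin v * tan y * (1 / cos x ^ 2 - tan x ^ 2) := by
  rw [dirD_eq_of_hasDerivAt (g := chi1₃) (((hasDerivAt_tan hx).const_mul (sin v)).mul_const _)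
    (((hasDerivAt_cos y).inv hy).const_mul (sin v * tan x))
    (((hasDerivAt_sin v).mul_const (tan x)).mul_const _)]
  simp only [chi3₁, chi3₂, chi3₃, tan_eq_sin_div_cos]
  field_simp
  ring

end

theorem chi1_chi3_bracket (x y v : ℝ) (hx : cos x ≠ 0) (hy : cos y ≠ 0) :
    lieB chi1₁ chi1₂ chi1₃ chi3₁ chi3₂ chi3₃ x y v =
      (-(chi4₁ x y v), -(chi4₂ x y v), -(chi4₃ x y v)) := by
  have hsec := one_div_cos_sq_eq_one_add_tan_sq hx
  rw [lieB, dirD_chi1_chi3₁, dirD_chi1_chi3₂ hx, dirD_chi1_chi3₃, dirD_chi3_chi1₁,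
    dirD_chi3_chi1₂ hx, dirD_chi3_chi1₃ hx hy]
  simp only [chi4₁, chi4₂, chi4₃, Prod.mk.injEq]
  refine ⟨by ring, ?_, by linear_combination -(sin v * tan y) * hsec⟩
  linear_combination -(cos v * (sin y ^ 2 + cos y ^ 2)) * hsec - cos v * sin_sq_add_cos_sq y
end
end

section
/- The vector fields χ2 = sin v cos y ∂x + sin v tan x sin y ∂y − cos v tan x sec y ∂v, χ3 = sin y ∂x − tan x cos y ∂y, and χ5 = sin v ∂y − cos v tan y ∂v satisfy [χ2, χ3] = −χ5, [χ2, χ5] = χ3, and [χ3, χ5] = −χ2, so their span is a Lie subalgebra. -/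
noncomputable section
open Real

section Helpers
open Real
variable (x y v : ℝ)

lemma Dx_chi2₁ : Dx chi2₁ x y v = 0 := by simp [Dx, chi2₁]
lemma Dy_chi2₁ : Dy chi2₁ x y v = -(sin v * sin y) := by
  have h : HasDerivAt (fun t => sin v * cos t) (sin v * (-sin y)) y :=
    (Real.hasDerivAt_cos y).const_mul (sin v)
  simp only [Dy, chi2₁]; rw [h.deriv]; ring
lemma Dv_chi2₁ : Dv chi2₁ x y v = cos v * cos y := by
  have h : HasDerivAt (fun t => sin t * cos y) (cos v * cos y) v :=
    (Real.hasDerivAt_sin v).mul_const (cos y)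
  simp only [Dv, chi2₁]; rw [h.deriv]

lemma Dx_chi2₂ (hx : cos x ≠ 0) : Dx chi2₂ x y v = sin v * sin y / cos x ^ 2 := by
  have h : HasDerivAt (fun t => sin v * tan t * sin y) (sin v * (1 / cos x ^ 2) * sin y) x :=
    ((Real.hasDerivAt_tan hx).const_mul (sin v)).mul_const (sin y)
  simp only [Dx, chi2₂]; rw [h.deriv]; ring
lemma Dy_chi2₂ : Dy chi2₂ x y v = sin v * tan x * cos y := by
  have h : HasDerivAt (fun t => sin v * tan x * sin t) (sin v * tan x * cos y) y :=
    (Real.hasDerivAt_sin y).const_mul (sin v * tan x)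
  simp only [Dy, chi2₂]; rw [h.deriv]
lemma Dv_chi2₂ : Dv chi2₂ x y v = cos v * tan x * sin y := by
  have h : HasDerivAt (fun t => sin t * tan x * sin y) (cos v * tan x * sin y) v :=
    ((Real.hasDerivAt_sin v).mul_const (tan x)).mul_const (sin y)
  simp only [Dv, chi2₂]; rw [h.deriv]

lemma Dx_chi2₃ (hx : cos x ≠ 0) : Dx chi2₃ x y v = -(cos v * (cos y)⁻¹ / cos x ^ 2) := by
  have h : HasDerivAt (fun t => -(cos v * tan t * (cos y)⁻¹))
      (-(cos v * (1 / cos x ^ 2) * (cos y)⁻¹)) x :=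
    (((Real.hasDerivAt_tan hx).const_mul (cos v)).mul_const ((cos y)⁻¹)).neg
  simp only [Dx, chi2₃]; rw [h.deriv]; ring
lemma Dy_chi2₃ (hy : cos y ≠ 0) : Dy chi2₃ x y v = -(cos v * tan x * sin y / cos y ^ 2) := by
  have h : HasDerivAt (fun t => -(cos v * tan x * (cos t)⁻¹))
      (-(cos v * tan x * (- -sin y / cos y ^ 2))) y :=
    (((Real.hasDerivAt_cos y).inv hy).const_mul (cos v * tan x)).neg
  simp only [Dy, chi2₃]; rw [h.deriv]; ring
lemma Dv_chi2₃ : Dv chi2₃ x y v = sin v * tan x * (cos y)⁻¹ := by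
  have h : HasDerivAt (fun t => -(cos t * tan x * (cos y)⁻¹))
      (-(-sin v * tan x * (cos y)⁻¹)) v :=
    (((Real.hasDerivAt_cos v).mul_const (tan x)).mul_const ((cos y)⁻¹)).neg
  simp only [Dv, chi2₃]; rw [h.deriv]; ring

lemma Dx_chi3₁ : Dx chi3₁ x y v = 0 := by simp [Dx, chi3₁]
lemma Dy_chi3₁ : Dy chi3₁ x y v = cos y := by
  simp only [Dy, chi3₁]; rw [(Real.hasDerivAt_sin y).deriv]
lemma Dv_chi3₁ : Dv chi3₁ x y v = 0 := by simp [Dv, chi3₁]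

lemma Dx_chi3₂ (hx : cos x ≠ 0) : Dx chi3₂ x y v = -(cos y / cos x ^ 2) := by
  have h : HasDerivAt (fun t => -(tan t * cos y)) (-(1 / cos x ^ 2 * cos y)) x :=
    ((Real.hasDerivAt_tan hx).mul_const (cos y)).neg
  simp only [Dx, chi3₂]; rw [h.deriv]; ring
lemma Dy_chi3₂ : Dy chi3₂ x y v = tan x * sin y := by
  have h : HasDerivAt (fun t => -(tan x * cos t)) (-(tan x * (-sin y))) y :=
    ((Real.hasDerivAt_cos y).const_mul (tan x)).neg
  simp only [Dy, chi3₂]; rw [h.deriv]; ring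
lemma Dv_chi3₂ : Dv chi3₂ x y v = 0 := by simp [Dv, chi3₂]

lemma Dx_chi3₃ : Dx chi3₃ x y v = 0 := by simp [Dx, chi3₃]
lemma Dy_chi3₃ : Dy chi3₃ x y v = 0 := by simp [Dy, chi3₃]
lemma Dv_chi3₃ : Dv chi3₃ x y v = 0 := by simp [Dv, chi3₃]

lemma Dx_chi5₁ : Dx chi5₁ x y v = 0 := by simp [Dx, chi5₁]
lemma Dy_chi5₁ : Dy chi5₁ x y v = 0 := by simp [Dy, chi5₁]
lemma Dv_chi5₁ : Dv chi5₁ x y v = 0 := by simp [Dv, chi5₁]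

lemma Dx_chi5₂ : Dx chi5₂ x y v = 0 := by simp [Dx, chi5₂]
lemma Dy_chi5₂ : Dy chi5₂ x y v = 0 := by simp [Dy, chi5₂]
lemma Dv_chi5₂ : Dv chi5₂ x y v = cos v := by
  simp only [Dv, chi5₂]; rw [(Real.hasDerivAt_sin v).deriv]

lemma Dx_chi5₃ : Dx chi5₃ x y v = 0 := by simp [Dx, chi5₃]
lemma Dy_chi5₃ (hy : cos y ≠ 0) : Dy chi5₃ x y v = -(cos v / cos y ^ 2) := by
  have h : HasDerivAt (fun t => -(cos v * tan t)) (-(cos v * (1 / cos y ^ 2))) y :=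
    ((Real.hasDerivAt_tan hy).const_mul (cos v)).neg
  simp only [Dy, chi5₃]; rw [h.deriv]; ring
lemma Dv_chi5₃ : Dv chi5₃ x y v = sin v * tan y := by
  have h : HasDerivAt (fun t => -(cos t * tan y)) (-(-sin v * tan y)) v :=
    ((Real.hasDerivAt_cos v).mul_const (tan y)).neg
  simp only [Dv, chi5₃]; rw [h.deriv]; ring

end Helpers

set_option maxHeartbeats 1600000 in
theorem chi2_chi3_chi5_subalgebra (x y v : ℝ) (hx : cos x ≠ 0) (hy : cos y ≠ 0) :
    lieB chi2₁ chi2₂ chi2₃ chi3₁ chi3₂ chi3₃ x y v =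
      (-(chi5₁ x y v), -(chi5₂ x y v), -(chi5₃ x y v)) ∧
    lieB chi2₁ chi2₂ chi2₃ chi5₁ chi5₂ chi5₃ x y v =
      (chi3₁ x y v, chi3₂ x y v, chi3₃ x y v) ∧
    lieB chi3₁ chi3₂ chi3₃ chi5₁ chi5₂ chi5₃ x y v =
      (-(chi2₁ x y v), -(chi2₂ x y v), -(chi2₃ x y v)) := by
  have hcx2 : cos x ^ 2 ≠ 0 := pow_ne_zero 2 hx
  have hcy2 : cos y ^ 2 ≠ 0 := pow_ne_zero 2 hy
  simp only [lieB, dirD,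
    Dx_chi2₁, Dy_chi2₁, Dv_chi2₁, Dx_chi2₂ x y v hx, Dy_chi2₂, Dv_chi2₂,
    Dx_chi2₃ x y v hx, Dy_chi2₃ x y v hy, Dv_chi2₃,
    Dx_chi3₁, Dy_chi3₁, Dv_chi3₁, Dx_chi3₂ x y v hx, Dy_chi3₂, Dv_chi3₂,
    Dx_chi3₃, Dy_chi3₃, Dv_chi3₃,
    Dx_chi5₁, Dy_chi5₁, Dv_chi5₁, Dx_chi5₂, Dy_chi5₂, Dv_chi5₂,
    Dx_chi5₃, Dy_chi5₃ x y v hy, Dv_chi5₃,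
    chi2₁, chi2₂, chi2₃, chi3₁, chi3₂, chi3₃, chi5₁, chi5₂, chi5₃,
    Real.tan_eq_sin_div_cos, Prod.mk.injEq]
  refine ⟨⟨?_, ?_, ?_⟩, ⟨?_, ?_, ?_⟩, ⟨?_, ?_, ?_⟩⟩
  all_goals field_simp
  all_goals try ring
  all_goals try simp only [Real.sin_sq]
  all_goals try ring
  all_goals (left; trivial)

end
end

section
/- The vector fields χ1 = cos v cos y ∂x + cos v tan x sin y ∂y + sin v tan x sec y ∂v, χ3 = sin y ∂x − tan x cos y ∂y, and χ4 = cos v ∂y + sin v tan y ∂v satisfy [χ1, χ3] = −χ4, [χ1, χ4] = χ3, and [χ3, χ4] = −χ1, so their span is a Lie subalgebra. -/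
noncomputable section
open Real

theorem deriv_inv_cos {y : ℝ} (hy : cos y ≠ 0) :
    deriv (fun t => (cos t)⁻¹) y = (cos y)⁻¹ * tan y := by
  rw [((hasDerivAt_cos y).fun_inv hy).deriv, tan_eq_sin_div_cos]
  field_simp

section

variable {x y v : ℝ}

theorem partials_chi1 (hy : cos y ≠ 0) :
    Dx chi1₁ x y v = 0 ∧ Dy chi1₁ x y v = -(cos v * sin y) ∧ Dv chi1₁ x y v = -(sin v * cos y) ∧
    Dx chi1₂ x y v = cos v * (1 / cos x ^ 2) * sin y ∧ Dy chi1₂ x y v = cos v * tan x * cos y ∧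
      Dv chi1₂ x y v = -(sin v * tan x * sin y) ∧
    Dx chi1₃ x y v = sin v * (1 / cos x ^ 2) * (cos y)⁻¹ ∧
      Dy chi1₃ x y v = sin v * tan x * ((cos y)⁻¹ * tan y) ∧
      Dv chi1₃ x y v = cos v * tan x * (cos y)⁻¹ := by
  refine ⟨?_, ?_, ?_, ?_, ?_, ?_, ?_, ?_, ?_⟩ <;>
    simp [Dx, Dy, Dv, chi1₁, chi1₂, chi1₃, Real.deriv_tan, deriv_inv_cos hy,
      deriv_mul_const_field, deriv_const_mul_field]

theorem partials_chi3 :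
    Dx chi3₁ x y v = 0 ∧ Dy chi3₁ x y v = cos y ∧ Dv chi3₁ x y v = 0 ∧
    Dx chi3₂ x y v = -(1 / cos x ^ 2 * cos y) ∧ Dy chi3₂ x y v = tan x * sin y ∧
      Dv chi3₂ x y v = 0 ∧
    Dx chi3₃ x y v = 0 ∧ Dy chi3₃ x y v = 0 ∧ Dv chi3₃ x y v = 0 := by
  refine ⟨?_, ?_, ?_, ?_, ?_, ?_, ?_, ?_, ?_⟩ <;>
    simp [Dx, Dy, Dv, chi3₁, chi3₂, chi3₃, Real.deriv_tan, deriv_mul_const_field]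

theorem partials_chi4 :
    Dx chi4₁ x y v = 0 ∧ Dy chi4₁ x y v = 0 ∧ Dv chi4₁ x y v = 0 ∧
    Dx chi4₂ x y v = 0 ∧ Dy chi4₂ x y v = 0 ∧ Dv chi4₂ x y v = -sin v ∧
    Dx chi4₃ x y v = 0 ∧ Dy chi4₃ x y v = sin v * (1 / cos y ^ 2) ∧
      Dv chi4₃ x y v = cos v * tan y := by
  refine ⟨?_, ?_, ?_, ?_, ?_, ?_, ?_, ?_, ?_⟩ <;>
    simp [Dx, Dy, Dv, chi4₁, chi4₂, chi4₃, Real.deriv_tan, deriv_const_mul_field]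

theorem lieB_chi1_chi3 (hx : cos x ≠ 0) (hy : cos y ≠ 0) :
    lieB chi1₁ chi1₂ chi1₃ chi3₁ chi3₂ chi3₃ x y v =
      (-(chi4₁ x y v), -(chi4₂ x y v), -(chi4₃ x y v)) := by
  simp only [lieB, dirD, partials_chi1 hy, partials_chi3]
  simp only [chi1₁, chi1₂, chi1₃, chi3₁, chi3₂, chi3₃, chi4₁, chi4₂, chi4₃, Prod.mk.injEq,
    one_div_cos_sq_eq_one_add_tan_sq hx, tan_eq_sin_div_cos y]
  refine ⟨by ring, ?_, ?_⟩
  · linear_combination (-cos v) * sin_sq_add_cos_sq y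
  · linear_combination (sin v * (cos y)⁻¹ * sin y * tan x ^ 2) * mul_inv_cancel₀ hy

theorem lieB_chi1_chi4 (hy : cos y ≠ 0) :
    lieB chi1₁ chi1₂ chi1₃ chi4₁ chi4₂ chi4₃ x y v = (chi3₁ x y v, chi3₂ x y v, chi3₃ x y v) := by
  simp only [lieB, dirD, partials_chi1 hy, partials_chi4]
  simp only [chi1₁, chi1₂, chi1₃, chi3₁, chi3₂, chi3₃, chi4₁, chi4₂, chi4₃, Prod.mk.injEq,
    tan_eq_sin_div_cos y]
  refine ⟨?_, ?_, by ring⟩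
  · linear_combination (sin v ^ 2 * sin y) * mul_inv_cancel₀ hy + sin y * sin_sq_add_cos_sq v
  · linear_combination (-(sin v ^ 2 * tan x * cos y)) * mul_inv_cancel₀ hy +
      (sin v ^ 2 * tan x * (cos y)⁻¹) * sin_sq_add_cos_sq y - (tan x * cos y) * sin_sq_add_cos_sq v

theorem lieB_chi3_chi4 (hy : cos y ≠ 0) :
    lieB chi3₁ chi3₂ chi3₃ chi4₁ chi4₂ chi4₃ x y v =
      (-(chi1₁ x y v), -(chi1₂ x y v), -(chi1₃ x y v)) := by
  simp only [lieB, dirD, partials_chi3, partials_chi4]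
  simp only [chi1₁, chi1₂, chi1₃, chi3₁, chi3₂, chi3₃, chi4₁, chi4₂, chi4₃, Prod.mk.injEq,
    tan_eq_sin_div_cos y]
  refine ⟨by ring, by ring, ?_⟩
  linear_combination (-(sin v * tan x * (cos y)⁻¹)) * mul_inv_cancel₀ hy

end

theorem chi1_chi3_chi4_subalgebra (x y v : ℝ) (hx : cos x ≠ 0) (hy : cos y ≠ 0) :
    lieB chi1₁ chi1₂ chi1₃ chi3₁ chi3₂ chi3₃ x y v =
      (-(chi4₁ x y v), -(chi4₂ x y v), -(chi4₃ x y v)) ∧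
    lieB chi1₁ chi1₂ chi1₃ chi4₁ chi4₂ chi4₃ x y v =
      (chi3₁ x y v, chi3₂ x y v, chi3₃ x y v) ∧
    lieB chi3₁ chi3₂ chi3₃ chi4₁ chi4₂ chi4₃ x y v =
      (-(chi1₁ x y v), -(chi1₂ x y v), -(chi1₃ x y v)) :=
  ⟨lieB_chi1_chi3 hx hy, lieB_chi1_chi4 hy, lieB_chi3_chi4 hy⟩

end
end

section
/- The flow (X, Y) of χ3 preserves the invariant ω: cos(X(x,y,λ)) · cos(Y(x,y,λ)) = cos x · cos y for all λ near 0, where X = arcsin(sin x cos λ − cos x sin y sin λ) and Y = arctan(tan y cos λ + tan x sec y sin λ). -/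
noncomputable section
open Real

/-- First component of the global flow of χ₃. -/
def Xf (x y l : ℝ) : ℝ := arcsin (sin x * cos l - cos x * sin y * sin l)
/-- Second component of the global flow of χ₃. -/
def Yf (x y l : ℝ) : ℝ := arctan (tan y * cos l + tan x * (cos y)⁻¹ * sin l)

/-- The flow of χ₃ preserves the invariant ω = cos x · cos y. -/
theorem flow_preserves_omega (x y : ℝ)
    (hx : x ∈ Set.Ioo (-(π / 2)) (π / 2)) (hy : y ∈ Set.Ioo (-(π / 2)) (π / 2)) :
    ∃ ε > 0, ∀ l : ℝ, |l| < ε →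
      cos (Xf x y l) * cos (Yf x y l) = cos x * cos y := by
  have hcx : 0 < cos x := cos_pos_of_mem_Ioo hx
  have hcy : 0 < cos y := cos_pos_of_mem_Ioo hy
  refine ⟨1, one_pos, fun l _ => ?_⟩
  set A : ℝ := sin x * cos l - cos x * sin y * sin l with hA
  set t : ℝ := tan y * cos l + tan x * (cos y)⁻¹ * sin l with ht
  have key : 1 - A ^ 2 = (cos x * cos y) ^ 2 * (1 + t ^ 2) := by
    have hB : (cos x * cos y) ^ 2 * (1 + t ^ 2)
        = (cos x * cos y) ^ 2 + (cos x * sin y * cos l + sin x * sin l) ^ 2 := by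
      rw [ht, tan_eq_sin_div_cos, tan_eq_sin_div_cos]
      have h1 : cos x ≠ 0 := ne_of_gt hcx
      have h2 : cos y ≠ 0 := ne_of_gt hcy
      field_simp
    rw [hA, hB]
    linear_combination (-(sin x ^ 2 + cos x ^ 2 * sin y ^ 2)) * sin_sq_add_cos_sq l
      - sin_sq_add_cos_sq x - cos x ^ 2 * sin_sq_add_cos_sq y
  have h1t : (0:ℝ) < 1 + t ^ 2 := by positivity
  rw [Xf, Yf, cos_arcsin, cos_arctan]
  rw [show 1 - A ^ 2 = (cos x * cos y) ^ 2 * (1 + t ^ 2) from key]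
  rw [sqrt_mul (by positivity), sqrt_sq (by positivity)]
  have hne : √(1 + t ^ 2) ≠ 0 := by positivity
  rw [mul_one_div, mul_div_assoc, div_self hne, mul_one]

end
end

section
/- The flow of χ3 shifts the canonical coordinate τ by λ: with X = arcsin(sin x cos λ − cos x sin y sin λ) and Y = arctan(tan y cos λ + tan x sec y sin λ), one has arctan(cot X · sin Y) = arctan(cot x · sin y) + λ for all sufficiently small λ. -/
noncomputable section
open Real

/-- The flow of χ₃ shifts the canonical coordinate τ = arctan(cot x · sin y) by λ. -/
theorem flow_shifts_tau (x y : ℝ)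
    (hx : x ∈ Set.Ioo 0 (π / 2)) (hy : y ∈ Set.Ioo (-(π / 2)) (π / 2)) :
    ∃ ε > 0, ∀ l : ℝ, |l| < ε →
      arctan ((cos (Xf x y l) / sin (Xf x y l)) * sin (Yf x y l)) =
        arctan ((cos x / sin x) * sin y) + l := by
  obtain ⟨hx1, hx2⟩ := hx
  obtain ⟨hy1, hy2⟩ := hy
  have hpi := pi_pos
  have hsx : 0 < sin x := sin_pos_of_pos_of_lt_pi hx1 (by linarith)
  have hcx : 0 < cos x := cos_pos_of_mem_Ioo ⟨by linarith, hx2⟩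
  have hcy : 0 < cos y := cos_pos_of_mem_Ioo ⟨hy1, hy2⟩
  set A : ℝ := sin x with hAdef
  set B : ℝ := cos x * sin y with hBdef
  set C : ℝ := cos x * cos y with hCdef
  have hCpos : 0 < C := mul_pos hcx hcy
  have hsum : A ^ 2 + B ^ 2 + C ^ 2 = 1 := by
    have h1 := sin_sq_add_cos_sq x
    have h2 := sin_sq_add_cos_sq y
    rw [hAdef, hBdef, hCdef]; nlinarith [h1, h2]
  set t : ℝ := B / A with htdef
  set θ : ℝ := arctan t with hθdef
  have hθlt : |θ| < π / 2 := by
    rw [abs_lt]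
    exact ⟨neg_pi_div_two_lt_arctan t, arctan_lt_pi_div_two t⟩
  refine ⟨π / 2 - |θ|, by linarith, ?_⟩
  intro l hl
  obtain ⟨hl1, hl2⟩ := abs_lt.mp hl
  have hθ1 := neg_abs_le θ
  have hθ2 := le_abs_self θ
  have hmem : θ + l ∈ Set.Ioo (-(π / 2)) (π / 2) := ⟨by linarith, by linarith⟩
  have hcpos : 0 < cos (θ + l) := cos_pos_of_mem_Ioo hmem
  have hcθ : 0 < cos θ := cos_pos_of_mem_Ioo ⟨by linarith, by linarith⟩
  have htanθ : sin θ / cos θ = t := by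
    rw [← tan_eq_sin_div_cos, hθdef, tan_arctan]
  have hsθ : sin θ = t * cos θ := by
    field_simp at htanθ; linarith [htanθ]
  have hAt : A * t = B := by
    rw [htdef]; field_simp
  set k : ℝ := A / cos θ with hkdef
  have hkpos : 0 < k := div_pos hsx hcθ
  set A' : ℝ := A * cos l - B * sin l with hA'def
  set B' : ℝ := A * sin l + B * cos l with hB'def
  have hA' : k * cos (θ + l) = A' := by
    rw [cos_add, hsθ, hA'def, hkdef, ← hAt]
    field_simp
  have hB' : k * sin (θ + l) = B' := by
    rw [sin_add, hsθ, hB'def, hkdef, ← hAt]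
    field_simp
    ring
  have hA'pos : 0 < A' := hA' ▸ mul_pos hkpos hcpos
  have hk2 : k ^ 2 = A ^ 2 + B ^ 2 := by
    have hcθ2 : cos θ ^ 2 = (1 + t ^ 2)⁻¹ := by
      rw [hθdef, cos_arctan, one_div, ← Real.sqrt_inv, Real.sq_sqrt (by positivity)]
    rw [hkdef, div_pow, hcθ2, ← hAt]
    field_simp
  have hsq : A' ^ 2 + B' ^ 2 = A ^ 2 + B ^ 2 := by
    have h := sin_sq_add_cos_sq (θ + l)
    calc A' ^ 2 + B' ^ 2 = k ^ 2 * (sin (θ + l) ^ 2 + cos (θ + l) ^ 2) := by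
          rw [← hA', ← hB']; ring
      _ = k ^ 2 := by rw [h, mul_one]
      _ = A ^ 2 + B ^ 2 := hk2
  have hA'lt : A' ^ 2 < 1 := by
    have h1 : A' ^ 2 ≤ A' ^ 2 + B' ^ 2 := le_add_of_nonneg_right (sq_nonneg B')
    have h3 : 0 < C ^ 2 := by positivity
    linarith
  have h1mA' : 1 - A' ^ 2 = C ^ 2 + B' ^ 2 := by linarith
  -- sin and cos of X
  have habsA' : |A'| < 1 := by
    rw [← sq_lt_one_iff_abs_lt_one]; exact hA'lt
  obtain ⟨hA'l, hA'u⟩ := abs_lt.mp habsA'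
  have hsinX : sin (Xf x y l) = A' := by
    rw [Xf, sin_arcsin (le_of_lt hA'l) (le_of_lt hA'u)]
  have hcosX : cos (Xf x y l) = Real.sqrt (C ^ 2 + B' ^ 2) := by
    rw [Xf, cos_arcsin, ← h1mA']
  have hSpos : 0 < Real.sqrt (C ^ 2 + B' ^ 2) := Real.sqrt_pos.mpr (by positivity)
  -- sin of Y
  have hYarg : tan y * cos l + tan x * (cos y)⁻¹ * sin l = B' / C := by
    rw [tan_eq_sin_div_cos, tan_eq_sin_div_cos, hB'def, hCdef, hAdef, hBdef]
    field_simp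
    ring
  have hsinY : sin (Yf x y l) = B' / Real.sqrt (C ^ 2 + B' ^ 2) := by
    rw [Yf, hYarg, sin_arctan]
    have hq : Real.sqrt (1 + (B' / C) ^ 2) = Real.sqrt (C ^ 2 + B' ^ 2) / C := by
      rw [show (1 : ℝ) + (B' / C) ^ 2 = (C ^ 2 + B' ^ 2) / C ^ 2 by
          field_simp,
        Real.sqrt_div (by positivity), Real.sqrt_sq hCpos.le]
    rw [hq, div_div_eq_mul_div, div_mul_eq_mul_div, mul_comm B' C, mul_div_assoc,
      mul_comm C, div_mul_cancel₀ _ hCpos.ne']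
  -- main computation
  have htan2 : tan (θ + l) = B' / A' := by
    rw [tan_eq_sin_div_cos, ← hA', ← hB', mul_div_mul_left _ _ hkpos.ne']
  have hmain : cos (Xf x y l) / sin (Xf x y l) * sin (Yf x y l) = tan (θ + l) := by
    rw [hsinX, hcosX, hsinY, htan2, div_mul_div_comm, mul_comm A' (Real.sqrt _),
      mul_div_mul_left _ _ hSpos.ne']
  have hrhs : cos x / sin x * sin y = t := by
    rw [htdef, hBdef, hAdef]; ring
  rw [hmain, arctan_tan hmem.1 hmem.2, hrhs, ← hθdef]
end
end
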